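/- arXiv:1504.05880 — 2 statements merged into one kernel-verified Lean document; each statement's English description precedes it below -/
import Mathlib

section
/- Let K be an n×n positive semidefinite matrix, λ > 0, y ∈ {0,1}ⁿ, α* = (K+λI)⁻¹y, and let α̃ = α* + e where ‖e‖_∞ ≤ β. Define ŷᵢ = 0 if the i-th entry of (K+λI)α̃ is < 1/2 and ŷᵢ = 1 otherwise. Then the Hamming distance satisfies d_H(y, ŷ) ≤ 4(‖K‖ + λ)² β² n. -/
open Matrix

/-- Spectral norm of a real square matrix. -/
noncomputable def specNorm {m : Type*} [Fintype m] [DecidableEq m] (M : Matrix m m ℝ) : ℝ :=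
  ‖Matrix.toEuclideanCLM (𝕜 := ℝ) M‖

open Finset

/-!
Since `(K + λI) α̃ = y + (K + λI) e`, thresholding at `1/2` can flip the label `yᵢ ∈ {0, 1}` only
where `|((K + λI) e)ᵢ| ≥ 1/2`. Counting these coordinates against the squared Euclidean norm,
their number is at most `4 ‖(K + λI) e‖₂² ≤ 4 (‖K‖ + λ)² ‖e‖₂² ≤ 4 (‖K‖ + λ)² β² n`.
-/

theorem Matrix.PosSemidef.posDef_add_smul_one {m : Type*} [Fintype m] [DecidableEq m]
    {K : Matrix m m ℝ} (hK : K.PosSemidef) {c : ℝ} (hc : 0 < c) :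
    (K + c • (1 : Matrix m m ℝ)).PosDef :=
  PosDef.posSemidef_add hK (PosDef.one.smul hc)

theorem Matrix.mulVec_nonsing_inv_mulVec_add {m R : Type*} [Fintype m] [DecidableEq m]
    [CommRing R] {M : Matrix m m R} (hM : IsUnit M) (y e : m → R) :
    M *ᵥ (M⁻¹ *ᵥ y + e) = y + M *ᵥ e := by
  rw [mulVec_add, mulVec_mulVec, mul_nonsing_inv M ((isUnit_iff_isUnit_det M).mp hM), one_mulVec]

section SpecNorm

variable {m : Type*} [Fintype m] [DecidableEq m]

theorem specNorm_nonneg (M : Matrix m m ℝ) : 0 ≤ specNorm M :=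
  norm_nonneg _

theorem specNorm_add_smul_one_le (K : Matrix m m ℝ) (c : ℝ) :
    specNorm (K + c • (1 : Matrix m m ℝ)) ≤ specNorm K + |c| := by
  unfold specNorm
  rw [map_add, map_smul, map_one]
  refine (norm_add_le _ _).trans (add_le_add le_rfl ?_)
  rw [norm_smul, Real.norm_eq_abs]
  exact mul_le_of_le_one_right (abs_nonneg c) ContinuousLinearMap.norm_id_le

theorem sum_sq_mulVec_le (M : Matrix m m ℝ) (x : m → ℝ) :
    ∑ i, (M *ᵥ x) i ^ 2 ≤ specNorm M ^ 2 * ∑ i, x i ^ 2 := by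
  have h := (toEuclideanCLM (𝕜 := ℝ) M).le_opNorm (WithLp.toLp 2 x)
  rw [toEuclideanCLM_toLp] at h
  have h2 := pow_le_pow_left₀ (norm_nonneg _) h 2
  rwa [mul_pow, EuclideanSpace.real_norm_sq_eq, EuclideanSpace.real_norm_sq_eq] at h2

end SpecNorm

theorem sum_sq_le_card_mul_sq {ι : Type*} [Fintype ι] {x : ι → ℝ} {β : ℝ}
    (h : ∀ i, |x i| ≤ β) : ∑ i, x i ^ 2 ≤ Fintype.card ι * β ^ 2 := by
  calc ∑ i, x i ^ 2 ≤ ∑ _i : ι, β ^ 2 :=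
        sum_le_sum fun i _ => sq_abs (x i) ▸ pow_le_pow_left₀ (abs_nonneg _) (h i) 2
    _ = Fintype.card ι * β ^ 2 := by simp

theorem card_mul_sq_le_sum_sq {ι : Type*} [Fintype ι] (s : Finset ι) {v : ι → ℝ} {c : ℝ}
    (hc : 0 ≤ c) (h : ∀ i ∈ s, c ≤ |v i|) : #s * c ^ 2 ≤ ∑ i, v i ^ 2 := by
  calc (#s : ℝ) * c ^ 2 = #s • c ^ 2 := (nsmul_eq_mul _ _).symm
    _ ≤ ∑ i ∈ s, v i ^ 2 :=
        card_nsmul_le_sum s _ _ fun i hi => sq_abs (v i) ▸ pow_le_pow_left₀ hc (h i hi) 2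
    _ ≤ ∑ i, v i ^ 2 := sum_le_univ_sum_of_nonneg fun _ => sq_nonneg _

theorem half_le_abs_of_threshold_ne {y d : ℝ} (hy : y = 0 ∨ y = 1)
    (h : (if y + d < 1 / 2 then (0 : ℝ) else 1) ≠ y) : 1 / 2 ≤ |d| := by
  rcases hy with rfl | rfl <;> split_ifs at h <;> norm_num at h <;> cases abs_cases d <;> linarith

/-- Reconstruction from noisy kernel ridge regression coefficients: if
`α̃ = (K+λI)⁻¹ y + e` with `‖e‖_∞ ≤ β`, and `ŷ` is obtained by thresholding
`(K+λI) α̃` at `1/2`, then `d_H(y, ŷ) ≤ 4(‖K‖+λ)² β² n`. -/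
theorem reconstruction_attack_hamming_bound (n : ℕ) (K : Matrix (Fin n) (Fin n) ℝ)
    (hK : K.PosSemidef) (lam : ℝ) (hlam : 0 < lam)
    (y : Fin n → ℝ) (hy : ∀ i, y i = 0 ∨ y i = 1)
    (e : Fin n → ℝ) (β : ℝ) (he : ∀ i, |e i| ≤ β)
    (αt : Fin n → ℝ)
    (hαt : αt = (K + lam • (1 : Matrix (Fin n) (Fin n) ℝ))⁻¹ *ᵥ y + e)
    (yhat : Fin n → ℝ)
    (hyhat : ∀ i, yhat i =
      if ((K + lam • (1 : Matrix (Fin n) (Fin n) ℝ)) *ᵥ αt) i < 1 / 2 then 0 else 1) :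
    ((Finset.univ.filter fun i => yhat i ≠ y i).card : ℝ)
      ≤ 4 * (specNorm K + lam) ^ 2 * β ^ 2 * n := by
  set M := K + lam • (1 : Matrix (Fin n) (Fin n) ℝ)
  set bad := univ.filter fun i => yhat i ≠ y i
  have hMαt : M *ᵥ αt = y + M *ᵥ e :=
    hαt ▸ mulVec_nonsing_inv_mulVec_add (hK.posDef_add_smul_one hlam).isUnit y e
  have hbad : #bad * (1 / 2 : ℝ) ^ 2 ≤ ∑ i, (M *ᵥ e) i ^ 2 :=
    card_mul_sq_le_sum_sq bad (by norm_num) fun i hi =>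
      half_le_abs_of_threshold_ne (hy i) (by simpa [hyhat, hMαt] using (mem_filter.mp hi).2)
  have hM : specNorm M ≤ specNorm K + lam := by
    simpa [abs_of_pos hlam] using specNorm_add_smul_one_le K lam
  calc (#bad : ℝ) = 4 * (#bad * (1 / 2) ^ 2) := by ring
    _ ≤ 4 * (specNorm M ^ 2 * ∑ i, e i ^ 2) := by
        gcongr 4 * ?_; exact hbad.trans (sum_sq_mulVec_le M e)
    _ ≤ 4 * ((specNorm K + lam) ^ 2 * (n * β ^ 2)) := by
        gcongr
        · exact specNorm_nonneg M
        · simpa using sum_sq_le_card_mul_sq he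
    _ = 4 * (specNorm K + lam) ^ 2 * β ^ 2 * n := by ring
end

section
/- Let x₁,…,xₙ ∈ ℝ^d be independent centered subgaussian random vectors with uniformly bounded ψ₂-norms, and let K_g[i,j] = exp(−a‖xᵢ−xⱼ‖²). If a < c₁/d for a suitable constant c₁ > 0, then there exist constants c₀, c₀′ > 0 such that Pr[‖K_g‖ ≥ c₀ n] ≥ 1 − exp(−c₀′ n). -/
open MeasureTheory ProbabilityTheory Real
open scoped RealInnerProductSpace

/-- A random vector `x` in `ℝ^d` is subgaussian with constant `Kc` if every one-dimensional
marginal `⟨x, u⟩`, for a unit vector `u`, has subgaussian tails with constant `Kc`. -/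
def IsSubgaussianVec {Ω : Type*} [MeasureSpace Ω] {d : ℕ} (Kc : ℝ)
    (x : Ω → EuclideanSpace ℝ (Fin d)) : Prop :=
  ∀ u : EuclideanSpace ℝ (Fin d), ‖u‖ = 1 → ∀ t : ℝ, 0 < t →
    (ℙ : Measure Ω) {ω | t < |⟪x ω, u⟫|} ≤ ENNReal.ofReal (2 * Real.exp (-t ^ 2 / Kc ^ 2))

/-!
A union bound over a `1/2`-net of the sphere (at most `5 ^ d` points, by a volume argument)
shows that each `‖xᵢ‖` exceeds `R = 2 Kc √(7d)` with probability at most `e⁻⁴`. By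
independence, at least half of the points are this large with probability at most
`(n choose ⌈n/2⌉) e^{-4⌈n/2⌉} ≤ e⁻ⁿ`. Otherwise the points with `‖xᵢ‖ ≤ R` form a set `S` of
at least `n/2` indices on which the kernel is at least `e⁻¹` once `a (2R)² ≤ 1`, and testing
the kernel against the indicator vector of `S` gives `‖K_g‖ ≥ e⁻¹ |S| ≥ e⁻¹ n / 2`.
-/

open Finset Metric Module
open scoped NNReal ENNReal

section Packing

variable {E : Type*} [NormedAddCommGroup E] [NormedSpace ℝ E] [FiniteDimensional ℝ E]

theorem card_le_of_isSeparated_of_subset_closedBall {ε : ℝ≥0} (hε : 0 < ε) {s : Finset E}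
    (hs : (s : Set E) ⊆ closedBall 0 1) (hsep : IsSeparated ε (s : Set E)) :
    (#s : ℝ) ≤ (1 + 2 / ε) ^ finrank ℝ E := by
  borelize E
  have hε₂ : (0 : ℝ) < ε / 2 := by positivity
  set μ : Measure E := Measure.addHaar
  have hball (x : E) {r : ℝ} (hr : 0 < r) :
      μ (ball x r) = ENNReal.ofReal (r ^ finrank ℝ E) * μ (ball 0 1) :=
    Measure.addHaar_ball_of_pos μ x hr
  have hdisj : (s : Set E).PairwiseDisjoint fun v => ball v (ε / 2) := by
    intro u hu v hv huv
    have : (ε : ℝ≥0∞) < edist u v := hsep hu hv huv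
    rw [edist_dist, ENNReal.coe_lt_ofReal] at this
    exact ball_disjoint_ball (by linarith)
  have hsub : (⋃ v ∈ s, ball v (ε / 2)) ⊆ ball (0 : E) (1 + ε / 2) := by
    refine Set.iUnion₂_subset fun v hv => ball_subset_ball' ?_
    have := mem_closedBall_zero_iff.mp (hs hv)
    rw [dist_zero_right]
    linarith
  have hvol : (#s : ℝ≥0∞) * μ (ball 0 (ε / 2)) ≤ μ (ball 0 (1 + ε / 2)) := by
    calc (#s : ℝ≥0∞) * μ (ball 0 (ε / 2)) = ∑ v ∈ s, μ (ball v (ε / 2)) := by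
          simp only [hball _ hε₂, sum_const, nsmul_eq_mul]
      _ = μ (⋃ v ∈ s, ball v (ε / 2)) :=
          (measure_biUnion_finset hdisj fun _ _ => measurableSet_ball).symm
      _ ≤ μ (ball 0 (1 + ε / 2)) := measure_mono hsub
  rw [hball 0 hε₂, hball 0 (show (0 : ℝ) < 1 + ε / 2 by positivity), ← mul_assoc,
    ENNReal.mul_le_mul_iff_left (measure_ball_pos μ 0 one_pos).ne' measure_ball_lt_top.ne,
    ← ENNReal.ofReal_natCast, ← ENNReal.ofReal_mul (by positivity),
    ENNReal.ofReal_le_ofReal_iff (by positivity)] at hvol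
  have hratio :
      (1 + 2 / ε : ℝ) ^ finrank ℝ E = (1 + ε / 2) ^ finrank ℝ E / (ε / 2) ^ finrank ℝ E := by
    rw [← div_pow]
    field_simp
    ring
  rwa [hratio, le_div_iff₀ (by positivity)]

theorem packingNumber_half_le_of_subset_closedBall {A : Set E} (hA : A ⊆ closedBall 0 1) :
    packingNumber (1 / 2) A ≤ 5 ^ finrank ℝ E := by
  refine iSup₂_le fun C hC => iSup_le fun hsep => ?_
  by_contra! hlarge
  obtain ⟨t, htC, htcard⟩ := Set.exists_subset_encard_eq (Order.add_one_le_of_lt hlarge)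
  obtain ⟨s, rfl⟩ := (Set.finite_of_encard_eq_coe htcard).exists_finset_coe
  have hcard : #s = 5 ^ finrank ℝ E + 1 := by
    exact_mod_cast (Set.encard_coe_eq_coe_finsetCard s).symm.trans htcard
  have := card_le_of_isSeparated_of_subset_closedBall (by norm_num) ((htC.trans hC).trans hA)
    (hsep.subset htC)
  norm_num [hcard] at this

theorem exists_finset_half_net_sphere :
    ∃ N : Finset E, #N ≤ 5 ^ finrank ℝ E ∧ (N : Set E) ⊆ sphere 0 1 ∧
      ∀ u ∈ sphere (0 : E) 1, ∃ v ∈ N, dist u v ≤ 1 / 2 := by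
  have hle := packingNumber_half_le_of_subset_closedBall (E := E) sphere_subset_closedBall
  have hfin : packingNumber (1 / 2) (sphere (0 : E) 1) ≠ ⊤ := ne_top_of_le_ne_top (by simp) hle
  have hcard := encard_maximalSeparatedSet hfin
  obtain ⟨N, hN⟩ := (Set.finite_of_encard_le_coe (hcard.trans_le hle)).exists_finset_coe
  refine ⟨N, ?_, hN ▸ maximalSeparatedSet_subset, fun u hu => ?_⟩
  · rw [← hN, Set.encard_coe_eq_coe_finsetCard] at hcard
    exact_mod_cast hcard.trans_le hle
  · obtain ⟨v, hv, huv⟩ := isCover_iff_subset_iUnion_closedBall.mp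
      (isCover_maximalSeparatedSet hfin) hu |> Set.mem_iUnion₂.mp
    exact ⟨v, by rwa [← hN] at hv, by simpa using huv⟩

end Packing

section Net

variable {E : Type*} [NormedAddCommGroup E] [InnerProductSpace ℝ E] [FiniteDimensional ℝ E]

theorem exists_finset_sphere_norm_le_two_mul_inner :
    ∃ N : Finset E, #N ≤ 5 ^ finrank ℝ E ∧ (∀ v ∈ N, ‖v‖ = 1) ∧
      ∀ x : E, x ≠ 0 → ∃ v ∈ N, ‖x‖ ≤ 2 * ⟪x, v⟫ := by
  obtain ⟨N, hcard, hsphere, hcover⟩ := exists_finset_half_net_sphere (E := E)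
  refine ⟨N, hcard, fun v hv => by simpa using hsphere hv, fun x hx => ?_⟩
  have hx' : 0 < ‖x‖ := norm_pos_iff.mpr hx
  set u := ‖x‖⁻¹ • x
  have hu : ‖u‖ = 1 := by simp [u, norm_smul, hx'.ne']
  obtain ⟨v, hvN, huv⟩ := hcover u (by simpa using hu)
  have hv : ‖v‖ = 1 := by simpa using hsphere hvN
  have hinner : 1 / 2 ≤ ⟪u, v⟫ := by
    have := norm_sub_sq_real u v
    rw [← dist_eq_norm, hu, hv] at this
    nlinarith [dist_nonneg (x := u) (y := v)]
  refine ⟨v, hvN, ?_⟩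
  calc ‖x‖ ≤ ‖x‖ * (2 * ⟪u, v⟫) := le_mul_of_one_le_right hx'.le (by linarith)
    _ = 2 * ⟪x, v⟫ := by
      rw [real_inner_smul_left]
      field_simp

end Net

theorem mul_card_le_specNorm {m : Type*} [Fintype m] [DecidableEq m] (M : Matrix m m ℝ)
    (S : Finset m) {c : ℝ} (h : ∀ i ∈ S, ∀ j ∈ S, c ≤ M i j) : c * #S ≤ specNorm M := by
  set v : EuclideanSpace ℝ m := WithLp.toLp 2 fun i => if i ∈ S then 1 else 0
  have hv : ‖v‖ ^ 2 = #S := by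
    simp [v, EuclideanSpace.norm_sq_eq]
  have hMv : ⟪v, Matrix.toEuclideanCLM (𝕜 := ℝ) M v⟫ = ∑ i ∈ S, ∑ j ∈ S, M i j := by
    simp [v, EuclideanSpace.inner_eq_star_dotProduct, dotProduct, Matrix.mulVec]
  have hlower : c * #S * #S ≤ ∑ i ∈ S, ∑ j ∈ S, M i j := by
    simpa [mul_comm, mul_assoc] using sum_le_sum fun i hi => sum_le_sum (h i hi)
  have hupper : ⟪v, Matrix.toEuclideanCLM (𝕜 := ℝ) M v⟫ ≤ specNorm M * #S := by
    calc _ ≤ ‖v‖ * ‖Matrix.toEuclideanCLM (𝕜 := ℝ) M v‖ := real_inner_le_norm _ _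
      _ ≤ ‖v‖ * (specNorm M * ‖v‖) := by gcongr; exact ContinuousLinearMap.le_opNorm _ _
      _ = specNorm M * #S := by rw [← hv]; ring
  rcases (#S).eq_zero_or_pos with hS | hS
  · simp [hS, specNorm]
  · exact le_of_mul_le_mul_right (hlower.trans (hMv ▸ hupper)) (by exact_mod_cast hS)

theorem exp_neg_one_mul_card_le_specNorm {ι E : Type*} [Fintype ι] [DecidableEq ι]
    [SeminormedAddCommGroup E] (x : ι → E) {a R : ℝ} (ha : 0 ≤ a) (haR : a * (2 * R) ^ 2 ≤ 1) :
    exp (-1) * #{i | ‖x i‖ ≤ R} ≤ specNorm (Matrix.of fun i j => exp (-a * ‖x i - x j‖ ^ 2)) := by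
  refine mul_card_le_specNorm _ _ fun i hi j hj => ?_
  rw [mem_filter] at hi hj
  have hdist : ‖x i - x j‖ ≤ 2 * R := by linarith [norm_sub_le (x i) (x j), hi.2, hj.2]
  have : a * ‖x i - x j‖ ^ 2 ≤ 1 :=
    (mul_le_mul_of_nonneg_left (pow_le_pow_left₀ (norm_nonneg _) hdist 2) ha).trans haR
  rw [Matrix.of_apply, exp_le_exp]
  linarith

theorem exp_neg_one_div_two_mul_card_le_specNorm {ι E : Type*} [Fintype ι] [DecidableEq ι]
    [SeminormedAddCommGroup E] (x : ι → E) {a R : ℝ} (ha : 0 ≤ a) (haR : a * (2 * R) ^ 2 ≤ 1)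
    (hfew : #{i | R < ‖x i‖} < (Fintype.card ι + 1) / 2) :
    exp (-1) / 2 * Fintype.card ι ≤
      specNorm (Matrix.of fun i j => exp (-a * ‖x i - x j‖ ^ 2)) := by
  have hcount : Fintype.card ι ≤ 2 * #{i | ‖x i‖ ≤ R} := by
    have := card_filter_add_card_filter_not (s := univ) fun i => ‖x i‖ ≤ R
    simp only [not_le, card_univ] at this
    omega
  calc exp (-1) / 2 * Fintype.card ι ≤ exp (-1) / 2 * (2 * #{i | ‖x i‖ ≤ R}) := by
        gcongr; exact_mod_cast hcount
    _ = exp (-1) * #{i | ‖x i‖ ≤ R} := by ring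
    _ ≤ _ := exp_neg_one_mul_card_le_specNorm x ha haR

theorem measure_le_card_filter_mem_le {Ω ι β : Type*} [MeasurableSpace Ω] [MeasurableSpace β]
    [Fintype ι] {μ : Measure Ω} {X : ι → Ω → β} (hX : iIndepFun X μ) {G : Set β}
    [DecidablePred (· ∈ G)] (hG : MeasurableSet G) {q : ℝ≥0∞} (hq : ∀ i, μ (X i ⁻¹' G) ≤ q)
    (k : ℕ) : μ {ω | k ≤ #{i | X i ω ∈ G}} ≤ (Fintype.card ι).choose k * q ^ k := by
  classical
  have hcover : {ω | k ≤ #{i | X i ω ∈ G}} ⊆ ⋃ S ∈ powersetCard k univ, ⋂ i ∈ S, X i ⁻¹' G := by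
    intro ω hω
    obtain ⟨S, hS, hcard⟩ := exists_subset_card_eq hω
    exact Set.mem_biUnion (mem_powersetCard.mpr ⟨subset_univ S, hcard⟩)
      (Set.mem_biInter fun i hi => (mem_filter.mp (hS hi)).2)
  have hinter : ∀ S ∈ powersetCard k (univ : Finset ι), μ (⋂ i ∈ S, X i ⁻¹' G) ≤ q ^ k := by
    intro S hS
    rw [hX.meas_biInter fun i _ => ⟨G, hG, rfl⟩, ← (mem_powersetCard.mp hS).2]
    exact prod_le_pow_card _ _ _ fun i _ => hq i
  calc μ {ω | k ≤ #{i | X i ω ∈ G}}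
      ≤ ∑ S ∈ powersetCard k univ, μ (⋂ i ∈ S, X i ⁻¹' G) :=
        (measure_mono hcover).trans (measure_biUnion_finset_le _ _)
    _ ≤ ∑ S ∈ powersetCard k (univ : Finset ι), q ^ k := sum_le_sum hinter
    _ = (Fintype.card ι).choose k * q ^ k := by
        rw [sum_const, card_powersetCard, card_univ, nsmul_eq_mul]

theorem choose_mul_exp_neg_four_pow_le {n k : ℕ} (hk : n ≤ 2 * k) :
    (n.choose k : ℝ) * exp (-4) ^ k ≤ exp (-n) := by
  have hchoose : (n.choose k : ℝ) ≤ exp n := by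
    calc (n.choose k : ℝ) ≤ 2 ^ n := by exact_mod_cast Nat.choose_le_two_pow n k
      _ ≤ exp 1 ^ n := by gcongr; linarith [add_one_le_exp 1]
      _ = exp n := by rw [← exp_nat_mul, mul_one]
  have hk' : (n : ℝ) ≤ 2 * k := by exact_mod_cast hk
  calc (n.choose k : ℝ) * exp (-4) ^ k ≤ exp n * exp (-4 * k) := by
        rw [← exp_nat_mul, mul_comm (k : ℝ)]
        gcongr
    _ ≤ exp (-n) := by rw [← exp_add, exp_le_exp]; linarith

theorem measure_half_le_card_filter_mem_le_exp_neg {Ω ι β : Type*} [MeasurableSpace Ω]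
    [MeasurableSpace β] [Fintype ι] {μ : Measure Ω} {X : ι → Ω → β} (hX : iIndepFun X μ)
    {G : Set β} [DecidablePred (· ∈ G)] (hG : MeasurableSet G)
    (hq : ∀ i, μ (X i ⁻¹' G) ≤ ENNReal.ofReal (exp (-4))) :
    μ {ω | (Fintype.card ι + 1) / 2 ≤ #{i | X i ω ∈ G}} ≤
      ENNReal.ofReal (exp (-Fintype.card ι)) := by
  refine (measure_le_card_filter_mem_le hX hG hq _).trans ?_
  rw [← ENNReal.ofReal_pow (exp_pos _).le, ← ENNReal.ofReal_natCast,
    ← ENNReal.ofReal_mul (by positivity)]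
  exact ENNReal.ofReal_le_ofReal (choose_mul_exp_neg_four_pow_le (by omega))

namespace IsSubgaussianVec

variable {Ω : Type*} [MeasureSpace Ω] {d : ℕ} {Kc : ℝ} {x : Ω → EuclideanSpace ℝ (Fin d)}

theorem measure_lt_norm_le (hx : IsSubgaussianVec Kc x) {t : ℝ} (ht : 0 < t) :
    ℙ {ω | t < ‖x ω‖} ≤ ENNReal.ofReal (5 ^ d * (2 * exp (-(t / 2) ^ 2 / Kc ^ 2))) := by
  obtain ⟨N, hcard, hunit, hnet⟩ :=
    exists_finset_sphere_norm_le_two_mul_inner (E := EuclideanSpace ℝ (Fin d))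
  rw [finrank_euclideanSpace_fin] at hcard
  have hcover : {ω | t < ‖x ω‖} ⊆ ⋃ v ∈ N, {ω | t / 2 < |⟪x ω, v⟫|} := by
    intro ω hω
    have hω : t < ‖x ω‖ := hω
    obtain ⟨v, hv, hle⟩ := hnet (x ω) (norm_pos_iff.mp (ht.trans hω))
    exact Set.mem_biUnion hv (show t / 2 < |⟪x ω, v⟫| by linarith [le_abs_self ⟪x ω, v⟫])
  calc ℙ {ω | t < ‖x ω‖} ≤ ∑ v ∈ N, ℙ {ω | t / 2 < |⟪x ω, v⟫|} :=
        (measure_mono hcover).trans (measure_biUnion_finset_le _ _)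
    _ ≤ ∑ v ∈ N, ENNReal.ofReal (2 * exp (-(t / 2) ^ 2 / Kc ^ 2)) :=
        sum_le_sum fun v hv => hx v (hunit v hv) _ (half_pos ht)
    _ ≤ ENNReal.ofReal (5 ^ d * (2 * exp (-(t / 2) ^ 2 / Kc ^ 2))) := by
        rw [sum_const, nsmul_eq_mul, ENNReal.ofReal_mul (by positivity : (0 : ℝ) ≤ 5 ^ d),
          ENNReal.ofReal_pow (by norm_num), ENNReal.ofReal_ofNat]
        gcongr
        exact_mod_cast hcard

theorem measure_lt_norm_le_exp_neg_four (hx : IsSubgaussianVec Kc x) (hKc : 0 < Kc)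
    (hd : 1 ≤ d) : ℙ {ω | 2 * Kc * √(7 * d) < ‖x ω‖} ≤ ENNReal.ofReal (exp (-4)) := by
  have hd' : (1 : ℝ) ≤ d := by exact_mod_cast hd
  refine (hx.measure_lt_norm_le (by positivity)).trans (ENNReal.ofReal_le_ofReal ?_)
  have hexponent : -(2 * Kc * √(7 * d) / 2) ^ 2 / Kc ^ 2 = -(7 * d) := by
    rw [mul_assoc, mul_div_cancel_left₀ _ two_ne_zero, mul_pow, sq_sqrt (by positivity)]
    field_simp
  have h5 : (5 : ℝ) ≤ exp 2 := by
    linarith [quadratic_le_exp_of_nonneg (zero_le_two (α := ℝ))]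
  have h2 : (2 : ℝ) ≤ exp 1 := by linarith [add_one_le_exp 1]
  calc 5 ^ d * (2 * exp (-(2 * Kc * √(7 * d) / 2) ^ 2 / Kc ^ 2))
      ≤ exp 2 ^ d * (exp 1 * exp (-(7 * d))) := by rw [hexponent]; gcongr
    _ = exp (1 - 5 * d) := by rw [← exp_nat_mul, ← exp_add, ← exp_add]; ring_nf
    _ ≤ exp (-4) := by rw [exp_le_exp]; linarith

end IsSubgaussianVec

/-- Lower bound for the spectral norm of a Gaussian kernel random matrix when the bandwidth
is small: if `a < c₁/d`, then `‖K_g‖ ≥ c₀ n` with probability at least `1 − exp(−c₀′ n)`. -/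
theorem specNorm_gaussian_kernel_lower :
    ∀ Kc : ℝ, 0 < Kc → ∃ c₁ c₀ c₀' : ℝ, 0 < c₁ ∧ 0 < c₀ ∧ 0 < c₀' ∧
      ∀ (n d : ℕ) (a : ℝ) (Ω : Type) (_ : MeasureSpace Ω),
        IsProbabilityMeasure (ℙ : Measure Ω) →
        ∀ X : Fin n → Ω → EuclideanSpace ℝ (Fin d),
          iIndepFun X ℙ →
          (∀ i, ∫ ω, X i ω = 0) →
          (∀ i, IsSubgaussianVec Kc (X i)) →
          0 < a → a < c₁ / d →
          1 - ENNReal.ofReal (Real.exp (-c₀' * n))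
            ≤ (ℙ : Measure Ω) {ω | c₀ * n ≤ specNorm (Matrix.of fun i j : Fin n =>
                Real.exp (-a * ‖X i ω - X j ω‖ ^ 2))} := by
  intro Kc hKc
  refine ⟨1 / (112 * Kc ^ 2), exp (-1) / 2, 1, by positivity, by positivity, one_pos, ?_⟩
  intro n d a Ω _ hP X hX _ hsub ha had
  have hd : 1 ≤ d := Nat.one_le_iff_ne_zero.mpr fun hd => by simp [hd] at had; linarith
  set R := 2 * Kc * √(7 * d)
  have haR : a * (2 * R) ^ 2 ≤ 1 := by
    have hd' : (0 : ℝ) < d := by exact_mod_cast hd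
    rw [lt_div_iff₀ hd', lt_div_iff₀ (by positivity)] at had
    have : (2 * R) ^ 2 = 112 * Kc ^ 2 * d := by
      simp only [R, mul_pow, sq_sqrt (by positivity : (0 : ℝ) ≤ 7 * d)]; ring
    rw [this]; linarith
  set bad := {ω | (Fintype.card (Fin n) + 1) / 2 ≤ #{i | X i ω ∈ {y | R < ‖y‖}}}
  have hbad : ℙ bad ≤ ENNReal.ofReal (exp (-Fintype.card (Fin n))) :=
    measure_half_le_card_filter_mem_le_exp_neg hX
      (measurableSet_lt measurable_const measurable_norm)
      fun i => (hsub i).measure_lt_norm_le_exp_neg_four hKc hd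
  have hgood : badᶜ ⊆ {ω | exp (-1) / 2 * n ≤ specNorm (Matrix.of fun i j : Fin n =>
      exp (-a * ‖X i ω - X j ω‖ ^ 2))} := fun ω hω => by
    simpa using exp_neg_one_div_two_mul_card_le_specNorm (X · ω) ha.le haR (not_le.mp hω)
  rw [Fintype.card_fin] at hbad
  calc 1 - ENNReal.ofReal (exp (-1 * n)) ≤ 1 - ℙ bad := by rw [neg_one_mul]; gcongr
    _ ≤ ℙ badᶜ := by
      rw [tsub_le_iff_right, add_comm, ← hP.measure_univ]
      exact measure_univ_le_add_compl bad
    _ ≤ _ := measure_mono hgood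
end
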